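/- For traceless 2×2 complex matrices Z, Z₀, Z₁, Z₂, Z₃, the Type 2 relation holds: Σ_{k=0}^{3} (−1)^k · tr(Z·Z_k) · tr(s₃(Z₀,…,Ẑ_k,…,Z₃)) = 0, where Ẑ_k means Z_k is omitted and s₃ is the standard alternating polynomial in three matrices. -/
import Mathlib


noncomputable def s3 (A : Fin 3 → Matrix (Fin 2) (Fin 2) ℂ) : Matrix (Fin 2) (Fin 2) ℂ :=
  ∑ σ : Equiv.Perm (Fin 3), ((Equiv.Perm.sign σ : ℤ) : ℂ) • (A (σ 0) * A (σ 1) * A (σ 2))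

lemma perm_sum (M : Type*) [AddCommMonoid M] (f : Equiv.Perm (Fin 3) → M) :
    ∑ σ : Equiv.Perm (Fin 3), f σ =
    f 1 + f (Equiv.swap 0 1) + f (Equiv.swap 0 2) + f (Equiv.swap 1 2)
      + f (Equiv.swap 0 1 * Equiv.swap 1 2) + f (Equiv.swap 1 2 * Equiv.swap 0 1) := by
  rw [show (Finset.univ : Finset (Equiv.Perm (Fin 3))) =
    {1, Equiv.swap 0 1, Equiv.swap 0 2, Equiv.swap 1 2,
     Equiv.swap 0 1 * Equiv.swap 1 2, Equiv.swap 1 2 * Equiv.swap 0 1} by decide]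
  rw [Finset.sum_insert (by decide), Finset.sum_insert (by decide),
    Finset.sum_insert (by decide), Finset.sum_insert (by decide),
    Finset.sum_insert (by decide), Finset.sum_singleton]
  abel

lemma s3_eq (A : Fin 3 → Matrix (Fin 2) (Fin 2) ℂ) :
    s3 A = A 0 * A 1 * A 2 - A 1 * A 0 * A 2 - A 2 * A 1 * A 0 - A 0 * A 2 * A 1
      + A 1 * A 2 * A 0 + A 2 * A 0 * A 1 := by
  rw [s3, perm_sum]
  have h1 : ∀ i : Fin 3, (1 : Equiv.Perm (Fin 3)) i = i := fun i => rfl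
  norm_num [Equiv.Perm.sign_swap, Equiv.swap_apply_def,
    show ((Equiv.swap 0 1 * Equiv.swap 1 2 : Equiv.Perm (Fin 3)) 0 = 1) from by decide,
    show ((Equiv.swap 0 1 * Equiv.swap 1 2 : Equiv.Perm (Fin 3)) 1 = 2) from by decide,
    show ((Equiv.swap 0 1 * Equiv.swap 1 2 : Equiv.Perm (Fin 3)) 2 = 0) from by decide,
    show ((Equiv.swap 1 2 * Equiv.swap 0 1 : Equiv.Perm (Fin 3)) 0 = 2) from by decide,
    show ((Equiv.swap 1 2 * Equiv.swap 0 1 : Equiv.Perm (Fin 3)) 1 = 0) from by decide,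
    show ((Equiv.swap 1 2 * Equiv.swap 0 1 : Equiv.Perm (Fin 3)) 2 = 1) from by decide]
  simp [Units.val_neg, Units.val_one]
  abel

set_option maxHeartbeats 2000000 in
theorem type_two_relation (Z : Matrix (Fin 2) (Fin 2) ℂ)
    (W : Fin 4 → Matrix (Fin 2) (Fin 2) ℂ)
    (hZ : Z.trace = 0) (hW : ∀ k, (W k).trace = 0) :
    ∑ k : Fin 4, (-1 : ℂ) ^ (k : ℕ) * (Z * W k).trace
        * (s3 (fun i => W (k.succAbove i))).trace = 0 := by
  have hZ' : Z 1 1 = -(Z 0 0) := by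
    have := hZ; simp [Matrix.trace, Fin.sum_univ_two, Matrix.diag] at this; linear_combination this
  have hW' : ∀ k, W k 1 1 = -(W k 0 0) := by
    intro k
    have := hW k; simp [Matrix.trace, Fin.sum_univ_two, Matrix.diag] at this; linear_combination this
  simp only [Fin.sum_univ_four, s3_eq,
    show ((0:Fin 4).succAbove 0) = 1 from by decide,
    show ((0:Fin 4).succAbove 1) = 2 from by decide,
    show ((0:Fin 4).succAbove 2) = 3 from by decide,
    show ((1:Fin 4).succAbove 0) = 0 from by decide,
    show ((1:Fin 4).succAbove 1) = 2 from by decide,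
    show ((1:Fin 4).succAbove 2) = 3 from by decide,
    show ((2:Fin 4).succAbove 0) = 0 from by decide,
    show ((2:Fin 4).succAbove 1) = 1 from by decide,
    show ((2:Fin 4).succAbove 2) = 3 from by decide,
    show ((3:Fin 4).succAbove 0) = 0 from by decide,
    show ((3:Fin 4).succAbove 1) = 1 from by decide,
    show ((3:Fin 4).succAbove 2) = 2 from by decide]
  simp only [Matrix.trace, Matrix.diag, Matrix.mul_apply, Matrix.sub_apply, Matrix.add_apply,
    Fin.sum_univ_two, Finset.sum_apply]
  simp only [hZ', hW', Fin.val_zero, Fin.val_one, Fin.val_two,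
    show ((3:Fin 4):ℕ) = 3 from rfl, pow_zero, pow_one, pow_succ]
  ring
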